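/- arXiv:1605.07135 — 3 statements merged into one kernel-verified Lean document; each statement's English description precedes it below -/
import Mathlib

section
/- Let λ be a partition with at most 3 rows and let ν and η be partitions contained in λ, where η has even shape (so η = (b, b) for some b ≥ 0). Then every Littlewood–Richardson tableau of skew shape λ/ν and weight η has no entry equal to 1 in its third row. Consequently, for every n ≥ 2 such a tableau is automatically n-symplectic Sundaram, i.e. the number of n-symplectic Sundaram Littlewood–Richardson tableaux of shape λ/ν and weight η equals the number of Littlewood–Richardson tableaux of shape λ/ν and weight η. -/
/-- Component `j` (0-indexed, `j < n`) of the vector in `ℤ^n` assigned to the letter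
`i ∈ {1,…,2n}`: the letter `i` is sent to the standard basis vector `e_i` if `1 ≤ i ≤ n`,
and to `−e_{2n+1−i}` if `n < i ≤ 2n`. -/
def letterVec (n i j : ℕ) : ℤ :=
  (if i = j + 1 then 1 else 0) - (if i + j = 2 * n then 1 else 0)

/-- Component `j` (0-indexed) of the sum of the vectors assigned to the letters of `w`. -/
def resSum (n : ℕ) (w : List ℕ) (j : ℕ) : ℤ :=
  (w.map fun i => letterVec n i j).sum

/-- A word `w` over `{1,…,2n}` has *dominant restriction* if every partial sum `p` of the
assigned vectors (over prefixes of `w`) satisfies `p 0 ≥ p 1 ≥ ⋯ ≥ p (n-1) ≥ 0`. -/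
def DominantRes (n : ℕ) (w : List ℕ) : Prop :=
  ∀ k : ℕ,
    (∀ j : ℕ, j + 1 < n → resSum n (w.take k) (j + 1) ≤ resSum n (w.take k) j) ∧
    0 ≤ resSum n (w.take k) (n - 1)

/-- A word over the positive integers is a *lattice word* if every prefix contains,
for each `i ≥ 1`, at least as many letters `i` as letters `i+1`. -/
def IsLatticeWord (w : List ℕ) : Prop :=
  ∀ k i : ℕ, 1 ≤ i → (w.take k).count (i + 1) ≤ (w.take k).count i

/-- The entries of row `r` (0-indexed) of `T` lying in the skew shape `lam/nu`,
read from right to left. -/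
def skewRowWord (T : ℕ → ℕ → ℕ) (nu lam : ℕ → ℕ) (r : ℕ) : List ℕ :=
  ((List.range' (nu r) (lam r - nu r)).map (T r)).reverse

/-- The reading word (rows right to left, top row to bottom row) of a skew tableau
whose rows are `0, …, k-1`. -/
def skewReadingWord (T : ℕ → ℕ → ℕ) (nu lam : ℕ → ℕ) (k : ℕ) : List ℕ :=
  ((List.range k).map (skewRowWord T nu lam)).flatten

/-- `T` is a skew semistandard tableau of shape `lam/nu`: entries are positive,
rows weakly increase from left to right, and columns strictly increase from top to bottom.
Rows are indexed `0, 1, 2, …` from the top and columns `0, 1, 2, …` from the left;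
the cells of row `r` are the `c` with `nu r ≤ c < lam r`. -/
def IsSkewSSYT (T : ℕ → ℕ → ℕ) (nu lam : ℕ → ℕ) : Prop :=
  (∀ r c, nu r ≤ c → c < lam r → 1 ≤ T r c) ∧
  (∀ r c c', nu r ≤ c → c ≤ c' → c' < lam r → T r c ≤ T r c') ∧
  (∀ r r' c, r < r' → nu r ≤ c → c < lam r → nu r' ≤ c → c < lam r' → T r c < T r' c)

/-- `T` is a semistandard Young tableau of (straight) shape `lam` with entries
in `{1, …, N}`. -/
def IsSSYT (T : ℕ → ℕ → ℕ) (lam : ℕ → ℕ) (N : ℕ) : Prop :=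
  IsSkewSSYT T (fun _ => 0) lam ∧ ∀ r c, c < lam r → T r c ≤ N

/-- The reading word of a straight-shape tableau with rows `0, …, k-1`. -/
def readingWord (T : ℕ → ℕ → ℕ) (lam : ℕ → ℕ) (k : ℕ) : List ℕ :=
  skewReadingWord T (fun _ => 0) lam k

/-- `T` vanishes outside the skew shape `lam/nu` (a normalization used when counting
tableaux, so that a tableau is determined by its entries inside the shape). -/
def ZeroOutside (T : ℕ → ℕ → ℕ) (nu lam : ℕ → ℕ) : Prop :=
  ∀ r c, c < nu r ∨ lam r ≤ c → T r c = 0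

/-- The partition with (at most) three rows `a ≥ b ≥ c`, as a row-length function. -/
def shape3 (a b c : ℕ) : ℕ → ℕ :=
  fun r => if r = 0 then a else if r = 1 then b else if r = 2 then c else 0

/-- `T` is a Littlewood–Richardson tableau of skew shape `lam/nu` and weight `eta`
(with rows `0, …, k-1`): a skew semistandard tableau whose reading word is a lattice
word and which has exactly `eta i` entries equal to `i + 1` for every `i`. -/
def IsLRTableau (T : ℕ → ℕ → ℕ) (nu lam eta : ℕ → ℕ) (k : ℕ) : Prop :=
  IsSkewSSYT T nu lam ∧ IsLatticeWord (skewReadingWord T nu lam k) ∧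
    ∀ i : ℕ, (skewReadingWord T nu lam k).count (i + 1) = eta i

/-- The `n`-symplectic Sundaram condition for a tableau of skew shape `lam/nu`, where `l`
is the length of the longest column of the weight: for each `i ≤ l/2`, the letter `2i+1`
does not occur strictly below row `n + i` (rows counted `1, 2, …` from the top; in the
0-indexed row `r` this means `r ≥ n + i`). -/
def IsSundaram (n l : ℕ) (T : ℕ → ℕ → ℕ) (nu lam : ℕ → ℕ) : Prop :=
  ∀ i : ℕ, i ≤ l / 2 → ∀ r c, n + i ≤ r → nu r ≤ c → c < lam r → T r c ≠ 2 * i + 1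

lemma aux_no1 (nu1 nu2 nu3 lam1 lam2 lam3 b : ℕ) (T : ℕ → ℕ → ℕ)
    (hT : IsLRTableau T (shape3 nu1 nu2 nu3) (shape3 lam1 lam2 lam3) (shape3 b b 0) 3) :
    ∀ c, nu3 ≤ c → c < lam3 → T 2 c ≠ 1 := by
  intro c hc1 hc2 hTc
  obtain ⟨⟨hpos, hrow, hcol⟩, hlat, hcount⟩ := hT
  have h1 : T 2 nu3 = 1 := by
    have h := hrow 2 nu3 c (le_refl _) hc1 hc2
    have h' := hpos 2 nu3 (le_refl _) (lt_of_le_of_lt hc1 hc2)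
    omega
  have hm : lam3 - nu3 = (lam3 - nu3 - 1) + 1 := by omega
  have hrow2 : skewRowWord T (shape3 nu1 nu2 nu3) (shape3 lam1 lam2 lam3) 2
      = (((List.range' (nu3+1) (lam3 - nu3 - 1)).map (T 2)).reverse) ++ [1] := by
    unfold skewRowWord
    rw [show shape3 lam1 lam2 lam3 2 = lam3 from rfl,
        show shape3 nu1 nu2 nu3 2 = nu3 from rfl, hm, List.range'_succ]
    simp [h1]
  set u := skewRowWord T (shape3 nu1 nu2 nu3) (shape3 lam1 lam2 lam3) 0
      ++ (skewRowWord T (shape3 nu1 nu2 nu3) (shape3 lam1 lam2 lam3) 1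
      ++ ((List.range' (nu3+1) (lam3 - nu3 - 1)).map (T 2)).reverse) with hu
  have hw : skewReadingWord T (shape3 nu1 nu2 nu3) (shape3 lam1 lam2 lam3) 3 = u ++ [1] := by
    rw [skewReadingWord, show List.range 3 = [0,1,2] from rfl]
    simp [hrow2, hu]
  have hc1w : (skewReadingWord T (shape3 nu1 nu2 nu3) (shape3 lam1 lam2 lam3) 3).count 1 = b :=
    hcount 0
  have hc2w : (skewReadingWord T (shape3 nu1 nu2 nu3) (shape3 lam1 lam2 lam3) 3).count 2 = b :=
    hcount 1
  rw [hw, List.count_append] at hc1w hc2w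
  simp only [List.count_singleton] at hc1w hc2w
  have htake : (skewReadingWord T (shape3 nu1 nu2 nu3) (shape3 lam1 lam2 lam3) 3).take
      ((skewReadingWord T (shape3 nu1 nu2 nu3) (shape3 lam1 lam2 lam3) 3).length - 1) = u := by
    rw [hw]
    simp
  have hl := hlat ((skewReadingWord T (shape3 nu1 nu2 nu3)
      (shape3 lam1 lam2 lam3) 3).length - 1) 1 (le_refl 1)
  rw [htake] at hl
  norm_num at hc1w hc2w hl
  omega

lemma aux_sund (nu1 nu2 nu3 lam1 lam2 lam3 b : ℕ) (T : ℕ → ℕ → ℕ)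
    (hT : IsLRTableau T (shape3 nu1 nu2 nu3) (shape3 lam1 lam2 lam3) (shape3 b b 0) 3)
    (n : ℕ) (hn : 2 ≤ n) :
    IsSundaram n (if b = 0 then 0 else 2) T (shape3 nu1 nu2 nu3) (shape3 lam1 lam2 lam3) := by
  intro i hi r c hr hc1 hc2 hTval
  have hi1 : i ≤ 1 := by split at hi <;> omega
  have hr3 : r < 3 := by
    by_contra h
    have hl : shape3 lam1 lam2 lam3 r = 0 := by
      unfold shape3; split_ifs <;> omega
    rw [hl] at hc2
    omega
  have hir : i = 0 ∧ r = 2 := by omega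
  obtain ⟨hi0, hr2⟩ := hir
  subst hi0 hr2
  exact aux_no1 nu1 nu2 nu3 lam1 lam2 lam3 b T hT c hc1 hc2 (by simpa using hTval)

/-- Let `λ = (λ1, λ2, λ3)` be a partition with at most 3 rows, `ν ⊆ λ`, and
`η = (b, b)` (the even-shape partitions contained in a 3-row `λ`) with `b ≤ λ2`. Then every
Littlewood–Richardson tableau of skew shape `λ/ν` and weight `η` has no entry equal to `1`
in its third row; consequently, for every `n ≥ 2` such a tableau is automatically
`n`-symplectic Sundaram, and the number of `n`-symplectic Sundaram Littlewood–Richardson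
tableaux of shape `λ/ν` and weight `η` equals the number of Littlewood–Richardson tableaux
of shape `λ/ν` and weight `η`. -/
theorem stmt1 (lam1 lam2 lam3 nu1 nu2 nu3 b : ℕ)
    (h12 : lam2 ≤ lam1) (h23 : lam3 ≤ lam2)
    (hnu12 : nu2 ≤ nu1) (hnu23 : nu3 ≤ nu2)
    (hs1 : nu1 ≤ lam1) (hs2 : nu2 ≤ lam2) (hs3 : nu3 ≤ lam3)
    (hb : b ≤ lam2)
    (T : ℕ → ℕ → ℕ)
    (hT : IsLRTableau T (shape3 nu1 nu2 nu3) (shape3 lam1 lam2 lam3) (shape3 b b 0) 3) :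
    (∀ c, nu3 ≤ c → c < lam3 → T 2 c ≠ 1) ∧
    (∀ n : ℕ, 2 ≤ n →
      IsSundaram n (if b = 0 then 0 else 2) T (shape3 nu1 nu2 nu3) (shape3 lam1 lam2 lam3)) ∧
    (∀ n : ℕ, 2 ≤ n →
      Set.ncard {L : ℕ → ℕ → ℕ |
          IsLRTableau L (shape3 nu1 nu2 nu3) (shape3 lam1 lam2 lam3) (shape3 b b 0) 3 ∧
          IsSundaram n (if b = 0 then 0 else 2) L (shape3 nu1 nu2 nu3)
            (shape3 lam1 lam2 lam3) ∧
          ZeroOutside L (shape3 nu1 nu2 nu3) (shape3 lam1 lam2 lam3)} =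
        Set.ncard {L : ℕ → ℕ → ℕ |
          IsLRTableau L (shape3 nu1 nu2 nu3) (shape3 lam1 lam2 lam3) (shape3 b b 0) 3 ∧
          ZeroOutside L (shape3 nu1 nu2 nu3) (shape3 lam1 lam2 lam3)}) := by
  refine ⟨aux_no1 nu1 nu2 nu3 lam1 lam2 lam3 b T hT, fun n hn =>
    aux_sund nu1 nu2 nu3 lam1 lam2 lam3 b T hT n hn, fun n hn => ?_⟩
  congr 1
  ext L
  simp only [Set.mem_setOf_eq]
  exact ⟨fun ⟨h1, _, h3⟩ => ⟨h1, h3⟩,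
    fun ⟨h1, h3⟩ => ⟨h1, aux_sund nu1 nu2 nu3 lam1 lam2 lam3 b L h1 n hn, h3⟩⟩
end

section
/- Let n ≥ 2 and let T be a semistandard Young tableau of shape λ, where λ is a partition with at most 3 rows, with entries in {1,…,2n}, and suppose the reading word of T has dominant restriction. Then every column of T, read from top to bottom, is one of the following six sequences: (1), (1,2), (1,2,3), (1,2n), (1,2,2n−1), (1,2,2n). (When n = 2 the sequences (1,2,3) and (1,2,2n−1) coincide.) -/
/-!
Read the word letter by letter. A letter `m ≥ 2` makes the partial sum non-dominant — its
coordinate `m` overtakes coordinate `m - 1` if `m ≤ n`, its coordinate `2n + 1 - m` becomes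
negative if `m > n` — unless some earlier letter acts on one of these coordinates, that is,
unless some earlier letter is `m - 1`, `m`, `2n + 1 - m` or `2n + 2 - m`. In the reading word
the letters before an entry are the entries of the rows above it and the entries to its right
in its own row, which are at least as large. Going through each row from right to left, this
forces the first row to consist of `1`s, the second of `2`s and `2n`s, and the third of `3`s,
`(2n - 1)`s and `2n`s.
-/

theorem resSum_append (n : ℕ) (u v : List ℕ) (j : ℕ) :
    resSum n (u ++ v) j = resSum n u j + resSum n v j := by
  simp [resSum]

theorem resSum_eq_zero {n j : ℕ} {w : List ℕ}
    (h : ∀ x ∈ w, x ≠ j + 1 ∧ x + j ≠ 2 * n) : resSum n w j = 0 :=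
  List.sum_eq_zero fun _ hy => by
    obtain ⟨x, hx, rfl⟩ := List.mem_map.1 hy
    simp [letterVec, (h x hx).1, (h x hx).2]

theorem DominantRes.resSum_nonneg {n : ℕ} {w : List ℕ} (h : DominantRes n w) (k : ℕ)
    {j : ℕ} (hj : j < n) : 0 ≤ resSum n (w.take k) j := by
  have hj' := Nat.le_sub_one_of_lt hj
  clear hj
  induction hj' using Nat.decreasingInduction with
  | self => exact (h k).2
  | of_succ i hi ih => exact ih.trans ((h k).1 i (by omega))

/-- `x` acts on one of the coordinates in which the letter `m` can break dominance. -/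
def IsNeighbour (n x m : ℕ) : Prop :=
  x + 1 = m ∨ x = m ∨ x + m = 2 * n + 1 ∨ x + m = 2 * n + 2

theorem DominantRes.exists_isNeighbour {n m : ℕ} {u v : List ℕ}
    (hw : DominantRes n (u ++ m :: v)) (hm2 : 2 ≤ m) (hm : m ≤ 2 * n) :
    ∃ x ∈ u, IsNeighbour n x m := by
  by_contra! hu
  simp only [IsNeighbour, not_or] at hu
  have hprefix : (u ++ m :: v).take (u.length + 1) = u ++ [m] := by
    simp [List.take_append]
  have hsum (j : ℕ) (hj : ∀ x ∈ u, x ≠ j + 1 ∧ x + j ≠ 2 * n) :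
      resSum n ((u ++ m :: v).take (u.length + 1)) j = letterVec n m j := by
    rw [hprefix, resSum_append, resSum_eq_zero hj]
    simp [resSum]
  rcases le_or_gt m n with hmn | hmn
  · have h := (hw (u.length + 1)).1 (m - 2) (by omega)
    rw [hsum _ fun x hx => by have := hu x hx; omega,
      hsum _ fun x hx => by have := hu x hx; omega] at h
    simp only [letterVec] at h
    split_ifs at h <;> omega
  · have h := hw.resSum_nonneg (u.length + 1) (j := 2 * n - m) (by omega)
    rw [hsum _ fun x hx => by have := hu x hx; omega] at h
    simp only [letterVec] at h
    split_ifs at h <;> omega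

theorem List.range'_eq_append_cons {s n i : ℕ} (h : i < n) :
    List.range' s n = List.range' s i ++ (s + i) :: List.range' (s + i + 1) (n - i - 1) := by
  rw [← List.range'_succ, List.range'_append_1]
  congr 1
  omega

theorem readingWord_eq_append_cons (T : ℕ → ℕ → ℕ) (lam : ℕ → ℕ) {k r c : ℕ}
    (hr : r < k) (hc : c < lam r) :
    ∃ u v, readingWord T lam k = u ++ T r c :: v ∧
      ∀ x ∈ u, (∃ r' < r, ∃ c' < lam r', x = T r' c') ∨
        ∃ c', c < c' ∧ c' < lam r ∧ x = T r c' := by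
  refine ⟨((List.range' 0 r).map (skewRowWord T (fun _ => 0) lam)).flatten ++
      ((List.range' (c + 1) (lam r - c - 1)).map (T r)).reverse,
    ((List.range' 0 c).map (T r)).reverse ++
      ((List.range' (r + 1) (k - r - 1)).map (skewRowWord T (fun _ => 0) lam)).flatten,
    ?_, ?_⟩
  · have hrow : skewRowWord T (fun _ => 0) lam r =
        ((List.range' (c + 1) (lam r - c - 1)).map (T r)).reverse ++
          T r c :: ((List.range' 0 c).map (T r)).reverse := by
      simp [skewRowWord, List.range'_eq_append_cons hc]
    simp [readingWord, skewReadingWord, List.range_eq_range', List.range'_eq_append_cons hr,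
      hrow]
  · intro x hx
    simp only [List.mem_append, List.mem_flatten, List.mem_map, List.mem_reverse,
      List.mem_range'_1, skewRowWord] at hx
    rcases hx with ⟨_, ⟨r', hr', rfl⟩, hx⟩ | ⟨c', hc', rfl⟩
    · simp only [List.mem_reverse, List.mem_map, List.mem_range'_1] at hx
      obtain ⟨c', hc', rfl⟩ := hx
      exact Or.inl ⟨r', by omega, c', by omega, rfl⟩
    · exact Or.inr ⟨c', by omega, by omega, rfl⟩

section Rows

variable {n k : ℕ} {T : ℕ → ℕ → ℕ} {lam : ℕ → ℕ}

theorem DominantRes.exists_isNeighbour_before (hdom : DominantRes n (readingWord T lam k))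
    {r c : ℕ} (hr : r < k) (hc : c < lam r) (h2 : 2 ≤ T r c) (hle : T r c ≤ 2 * n) :
    (∃ r' < r, ∃ c' < lam r', IsNeighbour n (T r' c') (T r c)) ∨
      ∃ c', c < c' ∧ c' < lam r ∧ IsNeighbour n (T r c') (T r c) := by
  obtain ⟨u, v, huv, hu⟩ := readingWord_eq_append_cons T lam hr hc
  obtain ⟨x, hx, hnb⟩ := (huv ▸ hdom).exists_isNeighbour h2 hle
  rcases hu x hx with ⟨r', hr', c', hc', rfl⟩ | ⟨c', hcc', hc', rfl⟩
  · exact Or.inl ⟨r', hr', c', hc', hnb⟩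
  · exact Or.inr ⟨c', hcc', hc', hnb⟩

theorem IsSSYT.forall_row_mem_of_dominantRes {A B : ℕ → Prop} (hT : IsSSYT T lam (2 * n))
    (hdom : DominantRes n (readingWord T lam k)) {r : ℕ} (hr : r < k)
    (hB : ∀ r' < r, ∀ c < lam r', B (T r' c))
    (hA : ∀ c < lam r, ¬A (T r c) →
      2 ≤ T r c ∧ ∀ x, B x ∨ T r c ≤ x ∧ A x → ¬IsNeighbour n x (T r c)) :
    ∀ c < lam r, A (T r c) := by
  intro c
  induction c using Nat.strong_decreasing_induction with
  | base => exact ⟨lam r, fun c hc hc' => absurd hc' (by omega)⟩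
  | step c ih =>
    intro hc
    by_contra hbad
    obtain ⟨h2, hiso⟩ := hA c hc hbad
    rcases hdom.exists_isNeighbour_before hr hc h2 (hT.2 r c hc) with
      ⟨r', hr', c', hc', hnb⟩ | ⟨c', hcc', hc', hnb⟩
    · exact hiso _ (Or.inl (hB r' hr' c' hc')) hnb
    · exact hiso _ (Or.inr ⟨hT.1.2.1 r c c' c.zero_le hcc'.le hc', ih c' hcc' hc'⟩) hnb

theorem IsSSYT.row_zero_eq_one (hT : IsSSYT T lam (2 * n))
    (hdom : DominantRes n (readingWord T lam k)) (hk : 0 < k) :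
    ∀ c < lam 0, T 0 c = 1 :=
  hT.forall_row_mem_of_dominantRes (A := (· = 1)) (B := fun _ => False) hdom hk (by simp)
    fun c hc (hA : T 0 c ≠ 1) => by
      have := hT.1.1 0 c c.zero_le hc
      have := hT.2 0 c hc
      refine ⟨by omega, fun x hx => ?_⟩
      simp only [IsNeighbour, false_or] at hx ⊢
      omega

theorem IsSSYT.row_one_mem (hT : IsSSYT T lam (2 * n))
    (hdom : DominantRes n (readingWord T lam k)) (hk : 1 < k) (hlam : lam 1 ≤ lam 0) :
    ∀ c < lam 1, T 1 c = 2 ∨ T 1 c = 2 * n :=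
  hT.forall_row_mem_of_dominantRes (A := fun x => x = 2 ∨ x = 2 * n) (B := (· = 1)) hdom hk
    (fun r' hr' c hc => by
      obtain rfl : r' = 0 := by omega
      exact hT.row_zero_eq_one hdom (by omega) c hc)
    fun c hc (hA : ¬(T 1 c = 2 ∨ T 1 c = 2 * n)) => by
      have := hT.1.2.2 0 1 c one_pos c.zero_le (by omega) c.zero_le hc
      have := hT.row_zero_eq_one hdom (by omega) c (by omega)
      have := hT.2 1 c hc
      refine ⟨by omega, fun x hx => ?_⟩
      simp only [IsNeighbour] at hx ⊢
      omega

theorem IsSSYT.row_two_mem (hT : IsSSYT T lam (2 * n))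
    (hdom : DominantRes n (readingWord T lam k)) (hk : 2 < k) (hlam₁ : lam 1 ≤ lam 0)
    (hlam₂ : lam 2 ≤ lam 1) :
    ∀ c < lam 2, T 2 c = 3 ∨ T 2 c = 2 * n - 1 ∨ T 2 c = 2 * n :=
  hT.forall_row_mem_of_dominantRes (A := fun x => x = 3 ∨ x = 2 * n - 1 ∨ x = 2 * n)
    (B := fun x => x = 1 ∨ x = 2 ∨ x = 2 * n) hdom hk
    (fun r' hr' c hc => by
      interval_cases r'
      · exact Or.inl (hT.row_zero_eq_one hdom (by omega) c hc)
      · exact Or.inr (hT.row_one_mem hdom (by omega) hlam₁ c hc))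
    fun c hc (hA : ¬(T 2 c = 3 ∨ T 2 c = 2 * n - 1 ∨ T 2 c = 2 * n)) => by
      have := hT.1.2.2 1 2 c one_lt_two c.zero_le (by omega) c.zero_le hc
      have := hT.row_one_mem hdom (by omega) hlam₁ c (by omega)
      have := hT.2 2 c hc
      refine ⟨by omega, fun x hx => ?_⟩
      simp only [IsNeighbour] at hx ⊢
      omega

end Rows

theorem stmt4_general (n : ℕ) (lam1 lam2 lam3 : ℕ)
    (h12 : lam2 ≤ lam1) (h23 : lam3 ≤ lam2)
    (T : ℕ → ℕ → ℕ) (hT : IsSSYT T (shape3 lam1 lam2 lam3) (2 * n))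
    (hdom : DominantRes n (readingWord T (shape3 lam1 lam2 lam3) 3)) :
    ∀ c : ℕ,
      (c < lam3 →
        T 0 c = 1 ∧ T 1 c = 2 ∧ (T 2 c = 3 ∨ T 2 c = 2 * n - 1 ∨ T 2 c = 2 * n)) ∧
      (lam3 ≤ c → c < lam2 → T 0 c = 1 ∧ (T 1 c = 2 ∨ T 1 c = 2 * n)) ∧
      (lam2 ≤ c → c < lam1 → T 0 c = 1) := by
  have row0 : ∀ c < lam1, T 0 c = 1 := hT.row_zero_eq_one hdom (by norm_num)
  have row1 : ∀ c < lam2, T 1 c = 2 ∨ T 1 c = 2 * n := hT.row_one_mem hdom (by norm_num) h12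
  have row2 : ∀ c < lam3, T 2 c = 3 ∨ T 2 c = 2 * n - 1 ∨ T 2 c = 2 * n :=
    hT.row_two_mem hdom (by norm_num) h12 h23
  intro c
  refine ⟨fun hc => ⟨row0 c (by omega), ?_, row2 c hc⟩,
    fun _ hc => ⟨row0 c (by omega), row1 c hc⟩, fun _ hc => row0 c hc⟩
  have : T 1 c < T 2 c :=
    hT.1.2.2 1 2 c one_lt_two c.zero_le (show c < lam2 by omega) c.zero_le hc
  have := hT.2 2 c hc
  have := row1 c (by omega)
  omega

/-- Let `n ≥ 2` and let `T` be a semistandard Young tableau of a 3-row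
shape `λ = (λ1, λ2, λ3)` with entries in `{1,…,2n}` whose reading word has dominant
restriction. Then each column of `T` (read top to bottom) is one of
`(1)`, `(1,2)`, `(1,2,3)`, `(1,2n)`, `(1,2,2n−1)`, `(1,2,2n)`. -/
theorem stmt4 (n : ℕ) (hn : 2 ≤ n) (lam1 lam2 lam3 : ℕ)
    (h12 : lam2 ≤ lam1) (h23 : lam3 ≤ lam2)
    (T : ℕ → ℕ → ℕ) (hT : IsSSYT T (shape3 lam1 lam2 lam3) (2 * n))
    (hdom : DominantRes n (readingWord T (shape3 lam1 lam2 lam3) 3)) :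
    ∀ c : ℕ,
      (c < lam3 →
        T 0 c = 1 ∧ T 1 c = 2 ∧ (T 2 c = 3 ∨ T 2 c = 2 * n - 1 ∨ T 2 c = 2 * n)) ∧
      (lam3 ≤ c → c < lam2 → T 0 c = 1 ∧ (T 1 c = 2 ∨ T 1 c = 2 * n)) ∧
      (lam2 ≤ c → c < lam1 → T 0 c = 1) :=
  stmt4_general n lam1 lam2 lam3 h12 h23 T hT hdom
end

section
/- Let n ≥ 2 and let T be a semistandard Young tableau of some partition shape with entries in {1,…,2n} whose reading word has dominant restriction; form res(T) by replacing each entry w > n by the barred letter \overline{2n+1−w}. Then in every column C of res(T), each barred entry \overline{l} of C has its unbarred version l also occurring as an entry of C. Consequently, in each column of res(T) the number of entries that are barred or are unbarred letters l with \overline{l} occurring in the same column is even (twice the number of barred entries of that column), so the shape η_T formed by these cancelled boxes, column by column, is even. -/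
/-!
Read `T` in reading order. Inductively, every cell `(r, c)` (rows from `0`) read so far holds
either the unbarred letter `r + 1` or a barred letter `l̄` with `l ≤ r`. When the cell `(r, c)`
with entry `v` is read, an unbarred `v ≠ r + 1` forces `v ≥ r + 2`, and then `v` arrives
before any `v - 1` or `v̄` has been read, so `p_v > p_{v-1}`; a barred `l̄` with `l > r`
arrives before any `l`, so `p_l < 0`. Hence a barred `l̄` in column `c` lies below row `l - 1`,
and the (unbarred) entry of row `l - 1` in column `c` is `l`. Sending each barred cell to this
partner is injective with unbarred image, which doubles the count.
-/

theorem resSum_eq_count_sub_count {n j : ℕ} (hj : j ≤ 2 * n) (w : List ℕ) :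
    resSum n w j = w.count (j + 1) - w.count (2 * n - j) := by
  induction w with
  | nil => simp [resSum]
  | cons a w ih =>
    simp only [resSum, List.map_cons, List.sum_cons, List.count_cons] at ih ⊢
    rw [ih, letterVec]
    split_ifs <;> simp_all <;> omega

namespace DominantRes

variable {n : ℕ} {w : List ℕ}

theorem of_isPrefix {w' : List ℕ} (h : DominantRes n w) (hw : w' <+: w) :
    DominantRes n w' := by
  intro m
  rw [List.prefix_iff_eq_take.1 hw, List.take_take]
  exact h _

theorem resSum_succ_le (h : DominantRes n w) {j : ℕ} (hj : j + 1 < n) :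
    resSum n w (j + 1) ≤ resSum n w j := by
  simpa using (h w.length).1 j hj

theorem resSum_nonneg_s10 (h : DominantRes n w) {j : ℕ} (hj : j < n) : 0 ≤ resSum n w j := by
  obtain ⟨d, hd⟩ : ∃ d, j + d = n - 1 := ⟨n - 1 - j, by omega⟩
  induction d generalizing j with
  | zero => simpa [show j = n - 1 by omega] using (h w.length).2
  | succ d ih => exact (ih (by omega) (by omega)).trans (h.resSum_succ_le (by omega))

theorem count_bar_le (h : DominantRes n w) {l : ℕ} (hl : 1 ≤ l) (hln : l ≤ n) :
    w.count (2 * n + 1 - l) ≤ w.count l := by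
  have := h.resSum_nonneg_s10 (j := l - 1) (by omega)
  rw [resSum_eq_count_sub_count (by omega), Nat.sub_add_cancel hl,
    show 2 * n - (l - 1) = 2 * n + 1 - l by omega] at this
  omega

theorem count_succ_add_count_bar_le (h : DominantRes n w) {l : ℕ} (hl : 1 ≤ l) (hln : l < n) :
    w.count (l + 1) + w.count (2 * n + 1 - l) ≤ w.count l + w.count (2 * n - l) := by
  have := h.resSum_succ_le (j := l - 1) (by omega)
  rw [resSum_eq_count_sub_count (by omega), resSum_eq_count_sub_count (by omega),
    Nat.sub_add_cancel hl, show 2 * n - (l - 1) = 2 * n + 1 - l by omega] at this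
  omega

end DominantRes

/-- Row `r` (from `0`) of `res(T)` may hold the unbarred letter `r + 1`, or the barred letter
`l̄` encoded by `y = 2n+1-l`, provided `l ≤ r`. -/
def RowAdmissible (n r y : ℕ) : Prop :=
  y = r + 1 ∨ (n < y ∧ 2 * n + 1 ≤ y + r)

theorem rowAdmissible_of_dominantRes_append {n r v : ℕ} {Q : List ℕ}
    (hdom : DominantRes n (Q ++ [v])) (hv : r + 1 ≤ v)
    (hQ : ∀ y ∈ Q, (∃ i < r, RowAdmissible n i y) ∨ (v ≤ y ∧ RowAdmissible n r y)) :
    RowAdmissible n r v := by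
  have hQ' : ∀ y ∈ Q, y ≤ r ∨ (n < y ∧ 2 * n + 2 ≤ y + r) ∨
      (v ≤ y ∧ (y = r + 1 ∨ (n < y ∧ 2 * n + 1 ≤ y + r))) := by
    intro y hy
    rcases hQ y hy with ⟨i, hi, h | h⟩ | ⟨hvy, h | h⟩ <;> omega
  have count_eq_zero : ∀ a, a ≠ v → (∀ y ∈ Q, y ≠ a) → (Q ++ [v]).count a = 0 := by
    intro a hav hQa
    rw [List.count_append, List.count_eq_zero.2 fun h => hQa a h rfl]
    simp [hav.symm]
  have count_v_pos : 0 < (Q ++ [v]).count v := by simp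
  by_cases hvn : v ≤ n
  · left
    by_contra hne
    have := hdom.count_succ_add_count_bar_le (l := v - 1) (by omega) (by omega)
    rw [Nat.sub_add_cancel (by omega : 1 ≤ v),
      count_eq_zero (v - 1) (by omega) fun y hy => by have := hQ' y hy; omega,
      count_eq_zero (2 * n - (v - 1)) (by omega) fun y hy => by have := hQ' y hy; omega] at this
    omega
  · refine Or.inr ⟨by omega, ?_⟩
    by_contra hlt
    have := hdom.count_bar_le (l := 2 * n + 1 - v) (by omega) (by omega)
    rw [show 2 * n + 1 - (2 * n + 1 - v) = v by omega,
      count_eq_zero (2 * n + 1 - v) (by omega) fun y hy => by have := hQ' y hy; omega] at this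
    omega

section ReadingWord

variable (T : ℕ → ℕ → ℕ) (lam : ℕ → ℕ)

theorem readingWord_succ (k : ℕ) :
    readingWord T lam (k + 1) = readingWord T lam k ++ skewRowWord T (fun _ => 0) lam k := by
  simp [readingWord, skewReadingWord, List.range_succ]

theorem readingWord_isPrefix {a b : ℕ} (hab : a ≤ b) :
    readingWord T lam a <+: readingWord T lam b := by
  induction b, hab using Nat.le_induction with
  | base => exact List.prefix_refl _
  | succ b _ ih => exact ih.trans (readingWord_succ T lam b ▸ List.prefix_append _ _)

def readingWordBefore (r c : ℕ) : List ℕ :=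
  readingWord T lam r ++ ((List.range' (c + 1) (lam r - (c + 1))).map (T r)).reverse

theorem readingWordBefore_append_isPrefix {r c : ℕ} (hc : c < lam r) :
    readingWordBefore T lam r c ++ [T r c] <+: readingWord T lam (r + 1) := by
  have hrow : List.range' 0 (lam r) =
      List.range' 0 c ++ [c] ++ List.range' (c + 1) (lam r - (c + 1)) := by
    rw [List.append_assoc, List.singleton_append, ← List.range'_succ]
    conv_lhs => rw [show lam r = c + (lam r - (c + 1) + 1) by omega, ← List.range'_append_1,
      zero_add]
  rw [readingWord_succ, skewRowWord, Nat.sub_zero, hrow, readingWordBefore]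
  simp only [List.map_append, List.reverse_append, List.map_cons, List.map_nil,
    List.reverse_cons, List.reverse_nil, List.nil_append, List.append_assoc]
  exact ⟨(List.map (T r) (List.range' 0 c)).reverse, by simp⟩

theorem mem_readingWordBefore {r c y : ℕ} (hy : y ∈ readingWordBefore T lam r c) :
    (∃ i < r, ∃ c' < lam i, T i c' = y) ∨ ∃ c', c < c' ∧ c' < lam r ∧ T r c' = y := by
  simp only [readingWordBefore, readingWord, skewReadingWord, skewRowWord, List.mem_append,
    List.mem_flatten, List.mem_map, exists_exists_and_eq_and, List.mem_range, List.mem_reverse,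
    List.mem_range'_1] at hy
  rcases hy with ⟨i, hi, c', hc', rfl⟩ | ⟨c', hc', rfl⟩
  · exact Or.inl ⟨i, hi, c', by omega, rfl⟩
  · exact Or.inr ⟨c', by omega, by omega, rfl⟩

end ReadingWord

/-- The row `l - 1` (from `0`) in which the barred entry `l̄` at `(r, c)`, where
`l = 2n+1-T r c`, finds its unbarred partner `l`. -/
def mateRow (n : ℕ) (T : ℕ → ℕ → ℕ) (c r : ℕ) : ℕ :=
  2 * n - T r c

namespace IsSkewSSYT

variable {n : ℕ} {T : ℕ → ℕ → ℕ} {lam : ℕ → ℕ}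

theorem row_eq_of_apply_eq {nu : ℕ → ℕ} (hT : IsSkewSSYT T nu lam) {a b c : ℕ}
    (ha : nu a ≤ c ∧ c < lam a) (hb : nu b ≤ c ∧ c < lam b) (hab : T a c = T b c) :
    a = b := by
  rcases lt_trichotomy a b with h | h | h
  · exact absurd hab (hT.2.2 a b c h ha.1 ha.2 hb.1 hb.2).ne
  · exact h
  · exact absurd hab (hT.2.2 b a c h hb.1 hb.2 ha.1 ha.2).ne'

theorem add_one_le_apply (hT : IsSkewSSYT T (fun _ => 0) lam) (hlam : Antitone lam) {r c : ℕ}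
    (hc : c < lam r) : r + 1 ≤ T r c := by
  induction r with
  | zero => exact hT.1 0 c c.zero_le hc
  | succ r ih =>
    have hc' : c < lam r := hc.trans_le (hlam r.le_succ)
    have := hT.2.2 r (r + 1) c r.lt_succ_self c.zero_le hc' c.zero_le hc
    have := ih hc'
    omega

theorem rowAdmissible {k : ℕ} (hT : IsSkewSSYT T (fun _ => 0) lam) (hlam : Antitone lam)
    (hk : ∀ r, k ≤ r → lam r = 0) (hdom : DominantRes n (readingWord T lam k)) {r c : ℕ}
    (hc : c < lam r) : RowAdmissible n r (T r c) := by
  have hrk : r + 1 ≤ k := by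
    by_contra h
    have := hk r (by omega)
    omega
  refine rowAdmissible_of_dominantRes_append
    (hdom.of_isPrefix ((readingWordBefore_append_isPrefix T lam hc).trans
      (readingWord_isPrefix T lam hrk))) (hT.add_one_le_apply hlam hc) fun y hy => ?_
  rcases mem_readingWordBefore T lam hy with ⟨i, hi, c', hc', rfl⟩ | ⟨c', hcc', hc', rfl⟩
  · exact Or.inl ⟨i, hi, hT.rowAdmissible hlam hk hdom hc'⟩
  · exact Or.inr ⟨hT.2.1 r c c' c.zero_le hcc'.le hc', hT.rowAdmissible hlam hk hdom hc'⟩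
termination_by (r, lam r - c)

theorem mateRow_spec (hT : IsSkewSSYT T (fun _ => 0) lam) (hlam : Antitone lam)
    (hadm : ∀ r c, c < lam r → RowAdmissible n r (T r c)) {r c : ℕ} (hc : c < lam r)
    (hbar : n < T r c) (hv : T r c ≤ 2 * n) :
    mateRow n T c r < r ∧ c < lam (mateRow n T c r) ∧
      T (mateRow n T c r) c = 2 * n + 1 - T r c := by
  have hlt : mateRow n T c r < r := by
    rcases hadm r c hc with h | h <;> unfold mateRow <;> omega
  have hc' : c < lam (mateRow n T c r) := hc.trans_le (hlam hlt.le)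
  have hcol := hT.2.2 _ r c hlt c.zero_le hc' c.zero_le hc
  refine ⟨hlt, hc', ?_⟩
  rcases hadm _ c hc' with h | h <;> unfold mateRow at h hcol ⊢ <;> omega

theorem card_cancelled (hT : IsSkewSSYT T (fun _ => 0) lam) (hlam : Antitone lam)
    (hadm : ∀ r c, c < lam r → RowAdmissible n r (T r c))
    (hbound : ∀ r c, c < lam r → T r c ≤ 2 * n) (k c : ℕ) :
    ((Finset.range k).filter fun r => c < lam r ∧
          (n < T r c ∨ ∃ r' ∈ Finset.range k, c < lam r' ∧ n < T r' c ∧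
            T r c = 2 * n + 1 - T r' c)).card =
        2 * ((Finset.range k).filter fun r => c < lam r ∧ n < T r c).card := by
  classical
  set B := (Finset.range k).filter fun r => c < lam r ∧ n < T r c
  have hmate : ∀ r, c < lam r → n < T r c → _ := fun r hc hbar =>
    hT.mateRow_spec hlam hadm hc hbar (hbound r c hc)
  have hcancelled : ((Finset.range k).filter fun r => c < lam r ∧
      (n < T r c ∨ ∃ r' ∈ Finset.range k, c < lam r' ∧ n < T r' c ∧
        T r c = 2 * n + 1 - T r' c)) = B ∪ B.image (mateRow n T c) := by
    ext u
    simp only [B, Finset.mem_filter, Finset.mem_union, Finset.mem_image, Finset.mem_range]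
    constructor
    · rintro ⟨hu, hcu, hbar | ⟨r', hr', hcr', hbar', hTu⟩⟩
      · exact Or.inl ⟨hu, hcu, hbar⟩
      · obtain ⟨-, hc', hT'⟩ := hmate r' hcr' hbar'
        exact Or.inr ⟨r', ⟨hr', hcr', hbar'⟩,
          hT.row_eq_of_apply_eq ⟨c.zero_le, hc'⟩ ⟨c.zero_le, hcu⟩ (hT'.trans hTu.symm)⟩
    · rintro (⟨hu, hcu, hbar⟩ | ⟨r', ⟨hr', hcr', hbar'⟩, rfl⟩)
      · exact ⟨hu, hcu, Or.inl hbar⟩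
      · obtain ⟨hlt, hc', hT'⟩ := hmate r' hcr' hbar'
        exact ⟨hlt.trans hr', hc', Or.inr ⟨r', hr', hcr', hbar', hT'⟩⟩
  have hdisj : Disjoint B (B.image (mateRow n T c)) := by
    simp only [Finset.disjoint_left, B, Finset.mem_filter, Finset.mem_image, Finset.mem_range]
    rintro _ ⟨-, -, hbar⟩ ⟨r', ⟨-, hcr', hbar'⟩, rfl⟩
    have := (hmate r' hcr' hbar').2.2
    omega
  have hinj : Set.InjOn (mateRow n T c) B := by
    intro a ha b hb hab
    simp only [B, Finset.mem_coe, Finset.mem_filter] at ha hb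
    have := hbound a c ha.2.1
    have := hbound b c hb.2.1
    unfold mateRow at hab
    exact hT.row_eq_of_apply_eq ⟨c.zero_le, ha.2.1⟩ ⟨c.zero_le, hb.2.1⟩ (by omega)
  rw [hcancelled, Finset.card_union_of_disjoint hdisj, Finset.card_image_of_injOn hinj, two_mul]

end IsSkewSSYT

theorem stmt10_general (n : ℕ) (lam : ℕ → ℕ)
    (hlam : ∀ r, lam (r + 1) ≤ lam r) (k : ℕ) (hk : ∀ r, k ≤ r → lam r = 0)
    (T : ℕ → ℕ → ℕ) (hT : IsSSYT T lam (2 * n))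
    (hdom : DominantRes n (readingWord T lam k)) :
    (∀ r c, c < lam r → n < T r c →
      ∃ r', c < lam r' ∧ T r' c = 2 * n + 1 - T r c) ∧
    (∀ c : ℕ,
      ((Finset.range k).filter fun r => c < lam r ∧
          (n < T r c ∨ ∃ r' ∈ Finset.range k, c < lam r' ∧ n < T r' c ∧
            T r c = 2 * n + 1 - T r' c)).card =
        2 * ((Finset.range k).filter fun r => c < lam r ∧ n < T r c).card) := by
  obtain ⟨hT, hbound⟩ := hT
  have hlam : Antitone lam := antitone_nat_of_succ_le hlam
  have hadm : ∀ r c, c < lam r → RowAdmissible n r (T r c) := fun _ _ hc =>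
    hT.rowAdmissible hlam hk hdom hc
  refine ⟨fun r c hc hbar => ?_, hT.card_cancelled hlam hadm hbound k⟩
  obtain ⟨-, hc', hmate⟩ := hT.mateRow_spec hlam hadm hc hbar (hbound r c hc)
  exact ⟨_, hc', hmate⟩

/-- Let `n ≥ 2` and let `T` be a semistandard Young tableau of some
partition shape with entries in `{1,…,2n}` whose reading word has dominant restriction,
and form `res(T)` by replacing each entry `w > n` by the barred letter `2n+1−w` (so the
cell `(r, c)` carries a barred entry iff `T r c > n`, and the barred entry there is
`l̄` with `l = 2n+1−T r c`). Then in every column of `res(T)` each barred entry `l̄` has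
its unbarred version `l` also occurring in that column; consequently, in each column the
number of cancelled boxes — boxes whose entry is barred, or is an unbarred letter `l`
such that `l̄` occurs in the same column — is even, namely twice the number of barred
entries of that column, so the shape `η_T` formed column by column by these cancelled
boxes is even. -/
theorem stmt10 (n : ℕ) (hn : 2 ≤ n) (lam : ℕ → ℕ)
    (hlam : ∀ r, lam (r + 1) ≤ lam r) (k : ℕ) (hk : ∀ r, k ≤ r → lam r = 0)
    (T : ℕ → ℕ → ℕ) (hT : IsSSYT T lam (2 * n))
    (hdom : DominantRes n (readingWord T lam k)) :
    (∀ r c, c < lam r → n < T r c →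
      ∃ r', c < lam r' ∧ T r' c = 2 * n + 1 - T r c) ∧
    (∀ c : ℕ,
      ((Finset.range k).filter fun r => c < lam r ∧
          (n < T r c ∨ ∃ r' ∈ Finset.range k, c < lam r' ∧ n < T r' c ∧
            T r c = 2 * n + 1 - T r' c)).card =
        2 * ((Finset.range k).filter fun r => c < lam r ∧ n < T r c).card) :=
  stmt10_general n lam hlam k hk T hT hdom
end
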